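/- arXiv:1304.4776 — 4 statements merged into one kernel-verified Lean document; each statement's English description precedes it below -/
import Mathlib

section
/- For any cluster seed (x, B) with x an N-tuple of elements of a field and B an N×N skew-symmetric integer matrix, and for any index k ∈ {1, ..., N}, the mutation μ_k is involutive: μ_k(μ_k(x, B)) = (x, B). -/
open Finset

/-- A cluster seed: an `N`-tuple of cluster variables in a field `F`, together with
an `N × N` integer exchange matrix. -/
abbrev Seed (F : Type*) (N : ℕ) : Type _ := (Fin N → F) × Matrix (Fin N) (Fin N) ℤ

variable {F : Type*} [Field F] {N : ℕ}

/-- Mutation of the cluster variables in direction `k`: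
`x̃_k = (∏_{j : b_{jk} > 0} x_j^{b_{jk}} + ∏_{j : b_{jk} < 0} x_j^{-b_{jk}}) / x_k`,
and `x̃_i = x_i` for `i ≠ k`. -/
noncomputable def mutateX (s : Seed F N) (k : Fin N) : Fin N → F := fun i =>
  if i = k then
    ((∏ j, s.1 j ^ (s.2 j k).toNat) + ∏ j, s.1 j ^ (-s.2 j k).toNat) / s.1 k
  else s.1 i

/-- Mutation of the exchange matrix in direction `k`. -/
def mutateB (B : Matrix (Fin N) (Fin N) ℤ) (k : Fin N) : Matrix (Fin N) (Fin N) ℤ :=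
  Matrix.of fun i j =>
    if i = k ∨ j = k then -B i j
    else B i j + ((B i k).natAbs * B k j + B i k * (B k j).natAbs) / 2

/-- Mutation `μ_k` of a seed in direction `k`. -/
noncomputable def mutate (s : Seed F N) (k : Fin N) : Seed F N :=
  (mutateX s k, mutateB s.2 k)

/-- The operation `s_{i,j}` transposing the `i`-th and `j`-th entries of the cluster
variable tuple and simultaneously the `i`-th and `j`-th rows and columns of the
exchange matrix. -/
def swapSeed (i j : Fin N) (s : Seed F N) : Seed F N :=
  (s.1 ∘ Equiv.swap i j, Matrix.of fun a b => s.2 (Equiv.swap i j a) (Equiv.swap i j b))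

/-- The `y`-variables of a seed: `y_j = ∏_k x_k^{b_{kj}}`. -/
noncomputable def yvar (s : Seed F N) : Fin N → F := fun j => ∏ k, s.1 k ^ (s.2 k j)

/-! Since `b_kk = 0`, the exchange binomial `P = ∏ x_j^[b_jk]₊ + ∏ x_j^[-b_jk]₊` does not involve
`x_k`, and mutating `B` only swaps its two monomials. Hence `μ_k ∘ μ_k` sends `x_k` to
`P / (P / x_k) = x_k`, where `P ≠ 0` because the `x_j` are algebraically independent. On `B`,
the correction term changes sign and is an exact half, so the second mutation cancels it. -/

namespace Int

theorem two_dvd_natAbs_mul_add_mul_natAbs (a b : ℤ) : 2 ∣ (a.natAbs * b + a * b.natAbs : ℤ) := by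
  simp only [natCast_natAbs]
  rcases abs_choice a with ha | ha <;> rcases abs_choice b with hb | hb <;> rw [ha, hb]
  · exact ⟨a * b, by ring⟩
  · exact ⟨0, by ring⟩
  · exact ⟨0, by ring⟩
  · exact ⟨-(a * b), by ring⟩

end Int

theorem Matrix.apply_self_eq_zero_of_transpose_eq_neg {n G : Type*} [AddGroup G]
    [IsAddTorsionFree G] {B : Matrix n n G} (hB : B.transpose = -B) (i : n) : B i i = 0 :=
  self_eq_neg.mp (congrFun (congrFun hB i) i)

theorem mutateB_apply_of_eq_right (B : Matrix (Fin N) (Fin N) ℤ) (i k : Fin N) :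
    mutateB B k i k = -B i k := by
  simp [mutateB]

theorem mutateB_involutive (B : Matrix (Fin N) (Fin N) ℤ) (k : Fin N) :
    mutateB (mutateB B k) k = B := by
  ext i j
  by_cases h : i = k ∨ j = k
  · simp [mutateB, h]
  · obtain ⟨hi, hj⟩ := not_or.mp h
    simp only [mutateB, Matrix.of_apply, hi, hj, or_self, or_true, true_or, if_true, if_false,
      Int.natAbs_neg]
    rw [show ∀ a b : ℤ, (a.natAbs * -b + -a * b.natAbs : ℤ) = -(a.natAbs * b + a * b.natAbs)
        from fun _ _ => by ring, Int.neg_ediv_of_dvd (Int.two_dvd_natAbs_mul_add_mul_natAbs _ _)]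
    ring

theorem prod_update_pow_of_eq_zero {ι M : Type*} [Fintype ι] [DecidableEq ι] [CommMonoid M]
    (x : ι → M) {k : ι} (y : M) {e : ι → ℕ} (he : e k = 0) :
    ∏ j, Function.update x k y j ^ e j = ∏ j, x j ^ e j :=
  Finset.prod_congr rfl fun j _ => by
    rcases eq_or_ne j k with rfl | hjk <;> simp [*]

noncomputable def exchangeBinomial (x : Fin N → F) (B : Matrix (Fin N) (Fin N) ℤ) (k : Fin N) : F :=
  (∏ j, x j ^ (B j k).toNat) + ∏ j, x j ^ (-B j k).toNat

theorem mutateX_eq_update (s : Seed F N) (k : Fin N) :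
    mutateX s k = Function.update s.1 k (exchangeBinomial s.1 s.2 k / s.1 k) := by
  funext i
  rcases eq_or_ne i k with rfl | hik <;> simp [mutateX, exchangeBinomial, *]

theorem exchangeBinomial_mutateB (x : Fin N → F) (B : Matrix (Fin N) (Fin N) ℤ) (k : Fin N) :
    exchangeBinomial x (mutateB B k) k = exchangeBinomial x B k := by
  simp only [exchangeBinomial, mutateB_apply_of_eq_right, neg_neg, add_comm]

theorem exchangeBinomial_update {B : Matrix (Fin N) (Fin N) ℤ} {k : Fin N} (hB : B k k = 0)
    (x : Fin N → F) (y : F) :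
    exchangeBinomial (Function.update x k y) B k = exchangeBinomial x B k := by
  simp only [exchangeBinomial,
    prod_update_pow_of_eq_zero (k := k) (e := fun j => (B j k).toNat) x y (by simp [hB]),
    prod_update_pow_of_eq_zero (k := k) (e := fun j => (-B j k).toNat) x y (by simp [hB])]

/- A sum of two monomials is the image of a nonzero polynomial: its coefficient at the first
exponent is `1` or `2`. -/
theorem AlgebraicIndependent.prod_pow_add_prod_pow_ne_zero {ι R A : Type*} [Fintype ι]
    [CommRing R] [CharZero R] [CommRing A] [Algebra R A] {x : ι → A}
    (hx : AlgebraicIndependent R x) (d₁ d₂ : ι → ℕ) :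
    (∏ j, x j ^ d₁ j) + ∏ j, x j ^ d₂ j ≠ 0 := by
  classical
  set m₁ := Finsupp.equivFunOnFinite.symm d₁
  set m₂ := Finsupp.equivFunOnFinite.symm d₂
  have hprod (m : ι →₀ ℕ) : (m.prod fun i n => x i ^ n) = ∏ j, x j ^ m j :=
    Finsupp.prod_fintype _ _ fun _ => pow_zero _
  have hcoeff : (MvPolynomial.monomial m₁ (1 : R) + MvPolynomial.monomial m₂ 1).coeff m₁ ≠ 0 := by
    rw [MvPolynomial.coeff_add, MvPolynomial.coeff_monomial, MvPolynomial.coeff_monomial, if_pos rfl]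
    split_ifs <;> norm_num
  intro hzero
  refine hcoeff ?_
  rw [hx.eq_zero_of_aeval_eq_zero (MvPolynomial.monomial m₁ 1 + MvPolynomial.monomial m₂ 1) ?_,
    MvPolynomial.coeff_zero]
  simpa [MvPolynomial.aeval_monomial, hprod, m₁, m₂] using hzero

theorem exchangeBinomial_ne_zero {x : Fin N → F} (hx : AlgebraicIndependent ℤ x)
    (B : Matrix (Fin N) (Fin N) ℤ) (k : Fin N) : exchangeBinomial x B k ≠ 0 :=
  hx.prod_pow_add_prod_pow_ne_zero _ _

/-- For any cluster seed `(x, B)` with `x` an `N`-tuple of algebraically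
independent elements of a field and `B` an `N × N` skew-symmetric integer matrix, and any
index `k`, the mutation `μ_k` is involutive: `μ_k (μ_k (x, B)) = (x, B)`. -/
theorem mutation_involutive {F : Type*} [Field F] {N : ℕ}
    (x : Fin N → F) (hx : AlgebraicIndependent ℤ x)
    (B : Matrix (Fin N) (Fin N) ℤ) (hB : B.transpose = -B) (k : Fin N) :
    mutate (mutate (x, B) k) k = (x, B) := by
  have hBkk : B k k = 0 := Matrix.apply_self_eq_zero_of_transpose_eq_neg hB k
  refine Prod.ext ?_ (mutateB_involutive B k)
  -- `x k` may be zero: then both mutations produce `0 = x k`.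
  simp only [mutate, mutateX_eq_update, Function.update_self, Function.update_idem,
    exchangeBinomial_mutateB, exchangeBinomial_update hBkk,
    div_div_cancel₀ (exchangeBinomial_ne_zero hx B k), Function.update_eq_self]
end

section
/- For any cluster seed (x, B) and indices j, k with b_{jk} = 0, the mutations commute: μ_j(μ_k(x, B)) = μ_k(μ_j(x, B)). -/
open Finset

variable {F : Type*} [Field F] {N : ℕ}

/-
Since `B` is skew-symmetric, `b_{jk} = 0` forces `b_{kj} = 0` as well. Mutation at `k` then
leaves column `j` of `B` unchanged, and the exchange binomial of `x_j` does not involve `x_k`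
(its exponent is `b_{kj} = 0`), so it does not see the mutation of `x_k`; symmetrically for `j`
and `k` swapped. Off rows and columns `j`, `k` of the matrix, both orders add the same two
correction terms, and on them both orders only flip signs.
-/

theorem mutateX_self (s : Seed F N) (k : Fin N) :
    mutateX s k k = ((∏ j, s.1 j ^ (s.2 j k).toNat) + ∏ j, s.1 j ^ (-s.2 j k).toNat) / s.1 k :=
  if_pos rfl

theorem mutateX_of_ne (s : Seed F N) {i k : Fin N} (h : i ≠ k) : mutateX s k i = s.1 i :=
  if_neg h

theorem mutateB_apply_of_apply_eq_zero {B : Matrix (Fin N) (Fin N) ℤ} {j k : Fin N}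
    (hkj : B k j = 0) (hjk : j ≠ k) (a : Fin N) : mutateB B k a j = B a j := by
  by_cases hak : a = k
  · subst hak
    simp [mutateB, hkj]
  · simp [mutateB, hak, hjk, hkj]

theorem prod_mutateX_pow (s : Seed F N) (k : Fin N) (n : Fin N → ℕ) (hn : n k = 0) :
    ∏ t, mutateX s k t ^ n t = ∏ t, s.1 t ^ n t := by
  refine prod_congr rfl fun t _ => ?_
  by_cases htk : t = k
  · subst htk
    simp [hn]
  · rw [mutateX_of_ne s htk]

theorem mutateX_mutate_self_of_apply_eq_zero (s : Seed F N) {j k : Fin N}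
    (hkj : s.2 k j = 0) (hjk : j ≠ k) : mutateX (mutate s k) j j = mutateX s j j := by
  have hcol := mutateB_apply_of_apply_eq_zero hkj hjk
  simp only [mutateX_self, mutate, hcol]
  rw [prod_mutateX_pow s k _ (by simp [hkj]), prod_mutateX_pow s k _ (by simp [hkj]),
    mutateX_of_ne s hjk]

theorem mutateX_mutate_comm (s : Seed F N) {j k : Fin N} (hjk : s.2 j k = 0)
    (hkj : s.2 k j = 0) : mutateX (mutate s k) j = mutateX (mutate s j) k := by
  rcases eq_or_ne j k with rfl | hne
  · rfl
  funext i
  by_cases hij : i = j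
  · subst hij
    rw [mutateX_mutate_self_of_apply_eq_zero s hkj hne, mutateX_of_ne _ hne]
    rfl
  by_cases hik : i = k
  · subst hik
    rw [mutateX_mutate_self_of_apply_eq_zero s hjk hne.symm, mutateX_of_ne _ hne.symm]
    rfl
  · simp only [mutateX_of_ne _ hij, mutateX_of_ne _ hik, mutate]

theorem mutateB_mutateB_comm {B : Matrix (Fin N) (Fin N) ℤ} {j k : Fin N} (hjk : B j k = 0)
    (hkj : B k j = 0) : mutateB (mutateB B k) j = mutateB (mutateB B j) k := by
  rcases eq_or_ne j k with rfl | hne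
  · rfl
  ext a b
  simp only [mutateB, Matrix.of_apply]
  by_cases haj : a = j <;> by_cases hak : a = k <;>
    by_cases hbj : b = j <;> by_cases hbk : b = k <;>
    simp [hne, hne.symm, haj, hak, hbj, hbk, hjk, hkj, add_right_comm]

theorem mutations_commute_general {F : Type*} [Field F] {N : ℕ}
    (x : Fin N → F)
    (B : Matrix (Fin N) (Fin N) ℤ) (hB : B.transpose = -B)
    (j k : Fin N) (hjk : B j k = 0) :
    mutate (mutate (x, B) k) j = mutate (mutate (x, B) j) k := by
  have hkj : B k j = 0 := by simpa [hjk] using congrFun (congrFun hB j) k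
  exact Prod.ext (mutateX_mutate_comm (x, B) hjk hkj) (mutateB_mutateB_comm hjk hkj)

/-- For any cluster seed `(x, B)` and indices `j, k` with `b_{jk} = 0`,
the mutations commute: `μ_j (μ_k (x, B)) = μ_k (μ_j (x, B))`. -/
theorem mutations_commute {F : Type*} [Field F] {N : ℕ}
    (x : Fin N → F) (hx : AlgebraicIndependent ℤ x)
    (B : Matrix (Fin N) (Fin N) ℤ) (hB : B.transpose = -B)
    (j k : Fin N) (hjk : B j k = 0) :
    mutate (mutate (x, B) k) j = mutate (mutate (x, B) j) k :=
  mutations_commute_general x B hB j k hjk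
end

section
/- The 7×7 exchange matrix B with rows (0,1,-1,0,0,0,0), (-1,0,0,1,0,0,0), (1,0,0,-1,0,0,0), (0,-1,1,0,1,-1,0), (0,0,0,-1,0,0,1), (0,0,0,1,0,0,-1), (0,0,0,0,-1,1,0) is invariant under the R-operator: if (x̃, B̃) = R(x, B), then B̃ = B; likewise for R^{-1}. -/
open Finset

variable {F : Type*} [Field F] {N : ℕ}

/-- The 7×7 exchange matrix of the paper (indices written 0-based). -/
def B7 : Matrix (Fin 7) (Fin 7) ℤ :=
  !![0, 1, -1, 0, 0, 0, 0;
     -1, 0, 0, 1, 0, 0, 0;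
     1, 0, 0, -1, 0, 0, 0;
     0, -1, 1, 0, 1, -1, 0;
     0, 0, 0, -1, 0, 0, 1;
     0, 0, 0, 1, 0, 0, -1;
     0, 0, 0, 0, -1, 1, 0]

/-- The R-operator `R = s_{3,5} ∘ s_{2,5} ∘ s_{3,6} ∘ μ_4 ∘ μ_2 ∘ μ_6 ∘ μ_4`
(applied right to left; indices here are 0-based, so `μ_4` is `mutate · 3`, etc.). -/
noncomputable def Rop7 (s : Seed F 7) : Seed F 7 :=
  swapSeed 2 4 (swapSeed 1 4 (swapSeed 2 5
    (mutate (mutate (mutate (mutate s 3) 5) 1) 3)))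

/-- The inverse R-operator `R⁻¹ = s_{3,6} ∘ s_{2,5} ∘ s_{3,5} ∘ μ_4 ∘ μ_5 ∘ μ_3 ∘ μ_4`
(applied right to left; 0-based indices). -/
noncomputable def Rinv7 (s : Seed F 7) : Seed F 7 :=
  swapSeed 2 5 (swapSeed 1 4 (swapSeed 2 4
    (mutate (mutate (mutate (mutate s 3) 2) 4) 3)))

/-! The exchange matrix of a mutated or relabelled seed depends only on the exchange matrix of
the original seed, so the invariance is a finite computation with integer matrices. -/

def swapB (i j : Fin N) (B : Matrix (Fin N) (Fin N) ℤ) : Matrix (Fin N) (Fin N) ℤ :=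
  B.submatrix (Equiv.swap i j) (Equiv.swap i j)

theorem mutate_snd (s : Seed F N) (k : Fin N) : (mutate s k).2 = mutateB s.2 k := rfl

theorem swapSeed_snd {α : Type*} (i j : Fin N) (s : Seed α N) :
    (swapSeed i j s).2 = swapB i j s.2 := rfl

def Rop7B (B : Matrix (Fin 7) (Fin 7) ℤ) : Matrix (Fin 7) (Fin 7) ℤ :=
  swapB 2 4 (swapB 1 4 (swapB 2 5 (mutateB (mutateB (mutateB (mutateB B 3) 5) 1) 3)))

def Rinv7B (B : Matrix (Fin 7) (Fin 7) ℤ) : Matrix (Fin 7) (Fin 7) ℤ :=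
  swapB 2 5 (swapB 1 4 (swapB 2 4 (mutateB (mutateB (mutateB (mutateB B 3) 2) 4) 3)))

theorem Rop7_snd (s : Seed F 7) : (Rop7 s).2 = Rop7B s.2 := by
  simp only [Rop7, Rop7B, swapSeed_snd, mutate_snd]

theorem Rinv7_snd (s : Seed F 7) : (Rinv7 s).2 = Rinv7B s.2 := by
  simp only [Rinv7, Rinv7B, swapSeed_snd, mutate_snd]

theorem Rop7B_B7 : Rop7B B7 = B7 := by decide

theorem Rinv7B_B7 : Rinv7B B7 = B7 := by decide

theorem B7_invariant_under_R_general {F : Type*} [Field F]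
    (x : Fin 7 → F) :
    (Rop7 (x, B7)).2 = B7 ∧ (Rinv7 (x, B7)).2 = B7 :=
  ⟨(Rop7_snd _).trans Rop7B_B7, (Rinv7_snd _).trans Rinv7B_B7⟩

/-- The 7×7 exchange matrix `B7` is invariant under the R-operator:
if `(x̃, B̃) = R(x, B7)` then `B̃ = B7`, and likewise for `R⁻¹`. -/
theorem B7_invariant_under_R {F : Type*} [Field F]
    (x : Fin 7 → F) (hx : AlgebraicIndependent ℤ x) :
    (Rop7 (x, B7)).2 = B7 ∧ (Rinv7 (x, B7)).2 = B7 :=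
  B7_invariant_under_R_general x
end

section
/- On seeds (x, B) with x = (x_1, ..., x_7) and B the 7×7 exchange matrix with rows (0,1,-1,0,0,0,0), (-1,0,0,1,0,0,0), (1,0,0,-1,0,0,0), (0,-1,1,0,1,-1,0), (0,0,0,-1,0,0,1), (0,0,0,1,0,0,-1), (0,0,0,0,-1,1,0), the periodicity identity s_{2,6} ∘ (μ_2 ∘ μ_6 ∘ μ_4)^3 = id holds: applying μ_4, μ_6, μ_2 in that order three times and then transposing indices 2 and 6 returns the original seed (x, B). -/
open Finset

variable {F : Type*} [Field F] {N : ℕ}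

/-! The nine mutations are computed one at a time. Every new cluster variable is a Laurent
polynomial whose numerator is subtraction-free, e.g. `(x₂x₄ + x₁x₅)/x₃`; such a numerator is a
positive integer at `x = 1`, so algebraic independence of `x` keeps it nonzero, and each exchange
relation can be solved for the new variable. The last three mutations give back `x₃`, `x₁`, `x₅`
in positions `3`, `5`, `1`, which the transposition `s_{2,6}` puts back in place. -/

theorem AlgebraicIndependent.aeval_ne_zero_of_eval_one_ne_zero {ι R A : Type*} [CommRing R]
    [CommRing A] [Algebra R A] {x : ι → A} (hx : AlgebraicIndependent R x)
    {p : MvPolynomial ι R} (hp : MvPolynomial.eval 1 p ≠ 0) : MvPolynomial.aeval x p ≠ 0 :=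
  (map_ne_zero_iff _ hx).2 fun h => hp (by simp [h])

theorem foldl_mutate_cons_eq_update {x : Fin N → F} {B : Matrix (Fin N) (Fin N) ℤ} {k : Fin N}
    {ks : List (Fin N)} (c : Fin N → ℤ) (y : F) (hc : (fun j => B j k) = c) (hk : x k ≠ 0)
    (hy : y * x k = (∏ j, x j ^ (c j).toNat) + ∏ j, x j ^ (-c j).toNat) :
    (k :: ks).foldl mutate (x, B) = ks.foldl mutate (Function.update x k y, mutateB B k) := by
  subst hc
  refine congrArg (ks.foldl mutate) (Prod.ext (funext fun i => ?_) rfl)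
  rcases eq_or_ne i k with rfl | hi
  · simp only [mutate, mutateX, if_pos, Function.update_self]
    exact (eq_div_of_mul_eq hk hy).symm
  · simp [mutate, mutateX, hi]

theorem periodicity_B7_of_ne_zero (x : Fin 7 → F)
    (h1 : x 1 ≠ 0) (h3 : x 3 ≠ 0) (h5 : x 5 ≠ 0) (hp1 : x 2 * x 4 + x 1 * x 5 ≠ 0)
    (hp2 : x 2 * x 4 * x 6 + x 2 * x 3 * x 4 + x 1 * x 5 * x 6 ≠ 0)
    (hp3 : x 2 * x 3 * x 4 + x 0 * x 2 * x 4 + x 0 * x 1 * x 5 ≠ 0)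
    (hp4 : x 2 * x 3 * x 4 * x 6 + x 2 * x 3 ^ 2 * x 4 + x 0 * x 2 * x 4 * x 6
      + x 0 * x 2 * x 3 * x 4 + x 0 * x 1 * x 5 * x 6 ≠ 0)
    (hp5 : x 3 + x 0 ≠ 0) (hp6 : x 6 + x 3 ≠ 0) :
    swapSeed 1 5 ([3, 5, 1, 3, 5, 1, 3, 5, 1].foldl mutate (x, B7)) = (x, B7) := by
  rw [foldl_mutate_cons_eq_update ![0, 1, -1, 0, -1, 1, 0] ((x 2 * x 4 + x 1 * x 5) / x 3)
      (by decide) h3 (by simp [Fin.prod_univ_seven]; field_simp; ring),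
    foldl_mutate_cons_eq_update ![0, 0, -1, 1, -1, 0, 1]
      ((x 2 * x 4 * x 6 + x 2 * x 3 * x 4 + x 1 * x 5 * x 6) / (x 3 * x 5))
      (by decide) (by simp [*]) (by simp [Fin.prod_univ_seven]; field_simp; ring),
    foldl_mutate_cons_eq_update ![1, 0, -1, 1, -1, 0, 0]
      ((x 2 * x 3 * x 4 + x 0 * x 2 * x 4 + x 0 * x 1 * x 5) / (x 1 * x 3))
      (by decide) (by simp [*]) (by simp [Fin.prod_univ_seven]; field_simp; ring),
    foldl_mutate_cons_eq_update ![0, 1, -1, 0, -1, 1, 0]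
      ((x 2 * x 3 * x 4 * x 6 + x 2 * x 3 ^ 2 * x 4 + x 0 * x 2 * x 4 * x 6
        + x 0 * x 2 * x 3 * x 4 + x 0 * x 1 * x 5 * x 6) / (x 1 * x 3 * x 5))
      (by decide) (by simp [*]) (by simp [Fin.prod_univ_seven]; field_simp; ring),
    foldl_mutate_cons_eq_update ![0, 0, 0, 1, 0, 0, -1] ((x 3 + x 0) / x 1)
      (by decide) (by simp [*]) (by simp [Fin.prod_univ_seven]; field_simp; ring),
    foldl_mutate_cons_eq_update ![-1, 0, 0, 1, 0, 0, 0] ((x 6 + x 3) / x 5)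
      (by decide) (by simp [*]) (by simp [Fin.prod_univ_seven]; field_simp; ring),
    foldl_mutate_cons_eq_update ![-1, 1, 1, 0, 1, 1, -1] (x 3)
      (by decide) (by simp [*]) (by simp [Fin.prod_univ_seven]; field_simp; ring),
    foldl_mutate_cons_eq_update ![-1, 0, 0, 1, 0, 0, 0] (x 1)
      (by decide) (by simp [*]) (by simp [Fin.prod_univ_seven]; field_simp),
    foldl_mutate_cons_eq_update ![0, 0, 0, 1, 0, 0, -1] (x 5)
      (by decide) (by simp [*]) (by simp [Fin.prod_univ_seven]; field_simp; ring),
    List.foldl_nil]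
  simp only [swapSeed, Prod.mk.injEq]
  refine ⟨funext fun i => ?_, by decide⟩
  fin_cases i <;> simp [Equiv.swap_apply_def]

/-- the periodicity `s_{2,6} ∘ (μ_2 ∘ μ_6 ∘ μ_4)³ = id`: applying
`μ_4, μ_6, μ_2` in that order three times and then transposing indices 2 and 6
(0-based: mutations at `3, 5, 1` and the swap `swapSeed 1 5`) returns the seed. -/
theorem periodicity_264 {F : Type*} [Field F]
    (x : Fin 7 → F) (hx : AlgebraicIndependent ℤ x) :
    swapSeed 1 5
      (mutate (mutate (mutate
        (mutate (mutate (mutate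
          (mutate (mutate (mutate (x, B7) 3) 5) 1) 3) 5) 1) 3) 5) 1)
      = (x, B7) := by
  refine periodicity_B7_of_ne_zero x (hx.ne_zero 1) (hx.ne_zero 3) (hx.ne_zero 5) ?_ ?_ ?_ ?_ ?_ ?_
  all_goals
    simp only [← MvPolynomial.aeval_X (R := ℤ) x, ← map_add, ← map_mul, ← map_pow]
    exact hx.aeval_ne_zero_of_eval_one_ne_zero (by norm_num)
end
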